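/- Let G be a finite simple graph with m edges and let H be the graph obtained from G as follows: for every edge {u,v} of G add two new vertices, each adjacent exactly to u and v; and add one further new vertex x adjacent to all original vertices of G. Then α'(H) = 2m + α(G), where α(G) is the independence number of G. -/

import Mathlib

namespace ECG

/-- The edge-clique graph `K_e(G)`: its vertices are the edges of `G`, and two distinct
edges are adjacent exactly when all their endpoints are pairwise adjacent in `G`
(i.e. the two edges lie in a common clique of `G`). -/
def edgeCliqueGraph {V : Type*} (G : SimpleGraph V) : SimpleGraph G.edgeSet where
  Adj e f := e ≠ f ∧ G.IsClique {v | v ∈ (e : Sym2 V) ∨ v ∈ (f : Sym2 V)}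
  symm := by
    constructor
    rintro e f ⟨hne, hcl⟩
    refine ⟨hne.symm, ?_⟩
    have h : {v | v ∈ (f : Sym2 V) ∨ v ∈ (e : Sym2 V)} =
        {v | v ∈ (e : Sym2 V) ∨ v ∈ (f : Sym2 V)} := by
      ext v; exact or_comm
    rw [h]; exact hcl
  loopless := ⟨fun e h => h.1 rfl⟩

/-- A set of vertices is independent when no two of its members are adjacent. -/
def IsIndepSet {V : Type*} (G : SimpleGraph V) (S : Set V) : Prop :=
  S.Pairwise fun a b => ¬ G.Adj a b

/-- The independence number `α(G)`: the maximum cardinality of an independent set. -/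
noncomputable def indepNum {V : Type*} (G : SimpleGraph V) : ℕ :=
  sSup {n | ∃ S : Finset V, IsIndepSet G ↑S ∧ S.card = n}

end ECG

namespace ECG

/-- The graph `H` obtained from `G` by adding, for every edge of `G`, two new
simplicial vertices adjacent exactly to the two endpoints of that edge, together with
one further vertex (modelled by `Unit`) adjacent to all original vertices of `G`. -/
def extGraph {V : Type*} (G : SimpleGraph V) :
    SimpleGraph (V ⊕ (G.edgeSet × Fin 2) ⊕ Unit) where
  Adj a b := match a, b with
    | .inl u, .inl v => G.Adj u v
    | .inl u, .inr (.inl p) => u ∈ (p.1 : Sym2 V)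
    | .inr (.inl p), .inl u => u ∈ (p.1 : Sym2 V)
    | .inl _, .inr (.inr _) => True
    | .inr (.inr _), .inl _ => True
    | _, _ => False
  symm := by
    constructor
    rintro (u | p | u) (v | q | v) h <;> first | exact h.symm | exact h
  loopless := by
    constructor
    rintro (u | p | u) h <;> first | exact G.irrefl h | exact h

end ECG


/-!
Write `x` for `apex G` and call the `2m` added vertices of degree two pendant vertices. An edge of
`H` avoiding `x` is either an edge `e` of `G` or joins a pendant vertex `(e, i)` to an endpoint of
`e`; say it covers `(e, i)` in the second case and `(e, 0)` in the first. All edges covering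
`(e, i)` lie in the triangle formed by `(e, i)` and the endpoints of `e`, so an independent set of
`K_e(H)` contains at most one of them, giving at most `2m` edges avoiding `x`. The edges `vx` it
contains form an independent set of `G`, since `vx, wx` lie in the triangle `vwx` when `v ~ w`.
Conversely, one edge at each pendant vertex together with the edges `vx` for `v` in a maximum
independent set of `G` pairwise share no clique.
-/

namespace ECG

open Finset Function SimpleGraph

lemma indepNum_eq_indepNum {V : Type*} (G : SimpleGraph V) : indepNum G = G.indepNum := by
  simp only [indepNum, SimpleGraph.indepNum, isNIndepSet_iff]
  rfl

section EdgeCliqueGraph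

variable {α : Type*} {H : SimpleGraph α}

lemma edgeCliqueGraph_adj_of_isClique {s : Set α} (hs : H.IsClique s) {t₁ t₂ : H.edgeSet}
    (hne : t₁ ≠ t₂) (h₁ : ∀ x ∈ (t₁ : Sym2 α), x ∈ s) (h₂ : ∀ x ∈ (t₂ : Sym2 α), x ∈ s) :
    (edgeCliqueGraph H).Adj t₁ t₂ :=
  ⟨hne, hs.subset fun _ hx => hx.elim (h₁ _) (h₂ _)⟩

lemma not_edgeCliqueGraph_adj {t₁ t₂ : H.edgeSet} {x y : α} (hx : x ∈ (t₁ : Sym2 α))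
    (hy : y ∈ (t₂ : Sym2 α)) (hxy : x ≠ y) (hadj : ¬H.Adj x y) :
    ¬(edgeCliqueGraph H).Adj t₁ t₂ :=
  fun h => hadj (h.2 (Or.inl hx) (Or.inr hy) hxy)

lemma subsingleton_of_isIndepSet_of_isClique {T : Set H.edgeSet}
    (hT : (edgeCliqueGraph H).IsIndepSet T) {s : Set α} (hs : H.IsClique s) :
    {t ∈ T | ∀ x ∈ (t : Sym2 α), x ∈ s}.Subsingleton := fun _ h₁ _ h₂ =>
  by_contra fun hne => hT h₁.1 h₂.1 hne (edgeCliqueGraph_adj_of_isClique hs hne h₁.2 h₂.2)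

lemma isClique_setOf_mem_edge {e : Sym2 α} (he : e ∈ H.edgeSet) : H.IsClique {v | v ∈ e} := by
  induction e using Sym2.ind with
  | _ a b =>
    have hab : {v | v ∈ s(a, b)} = {a, b} := by ext; simp
    exact hab ▸ isClique_pair.2 fun _ => he

end EdgeCliqueGraph

section ExtGraph

variable {V : Type*} {G : SimpleGraph V}

def apex (G : SimpleGraph V) : V ⊕ (G.edgeSet × Fin 2) ⊕ Unit := .inr (.inr ())

def pendantTriangle (p : G.edgeSet × Fin 2) : Set (V ⊕ (G.edgeSet × Fin 2) ⊕ Unit) :=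
  insert (.inr (.inl p)) (Sum.inl '' {u | u ∈ (p.1 : Sym2 V)})

lemma isClique_image_inl {s : Set V} (hs : G.IsClique s) :
    (extGraph G).IsClique (Sum.inl '' s) := by
  rintro _ ⟨u, hu, rfl⟩ _ ⟨v, hv, rfl⟩ huv
  exact hs hu hv (ne_of_apply_ne _ huv)

lemma isClique_insert_apex {s : Set V} (hs : G.IsClique s) :
    (extGraph G).IsClique (insert (apex G) (Sum.inl '' s)) :=
  isClique_insert.2 ⟨isClique_image_inl hs, by rintro _ ⟨u, -, rfl⟩ -; trivial⟩

lemma isClique_pendantTriangle (p : G.edgeSet × Fin 2) :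
    (extGraph G).IsClique (pendantTriangle p) :=
  isClique_insert.2 ⟨isClique_image_inl (isClique_setOf_mem_edge p.1.2),
    by rintro _ ⟨u, hu, rfl⟩ -; exact hu⟩

def apexEdge (v : V) : (extGraph G).edgeSet :=
  ⟨s(.inl v, apex G), trivial⟩

noncomputable def pendantEdge (p : G.edgeSet × Fin 2) : (extGraph G).edgeSet :=
  ⟨s(.inl (p.1 : Sym2 V).out.1, .inr (.inl p)), Sym2.out_fst_mem _⟩

lemma apexEdge_injective : Injective (apexEdge (G := G)) := by
  intro v w h
  simpa [apexEdge, apex] using congrArg Subtype.val h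

lemma pendantEdge_injective : Injective (pendantEdge (G := G)) := by
  intro p q h
  have hval := congrArg Subtype.val h
  simp only [pendantEdge, Sym2.eq_iff, Sum.inl.injEq, Sum.inr.injEq, reduceCtorEq, and_false,
    or_false] at hval
  exact hval.2

lemma pendantEdge_ne_apexEdge (p : G.edgeSet × Fin 2) (v : V) : pendantEdge p ≠ apexEdge v := by
  intro h
  simpa [pendantEdge, apexEdge, apex] using congrArg Subtype.val h

lemma exists_eq_apexEdge {t : (extGraph G).edgeSet} (h : apex G ∈ (t : Sym2 _)) :
    ∃ v, t = apexEdge v := by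
  obtain ⟨t, ht⟩ := t
  obtain ⟨y, rfl⟩ := Sym2.mem_iff_exists.1 h
  rcases y with v | _ | _
  · exact ⟨v, Subtype.ext Sym2.eq_swap⟩
  all_goals exact ht.elim

def Covers (t : Sym2 (V ⊕ (G.edgeSet × Fin 2) ⊕ Unit)) (p : G.edgeSet × Fin 2) : Prop :=
  .inr (.inl p) ∈ t ∨ (p.2 = 0 ∧ t = (p.1 : Sym2 V).map Sum.inl)

lemma exists_covers {t : Sym2 (V ⊕ (G.edgeSet × Fin 2) ⊕ Unit)} (ht : t ∈ (extGraph G).edgeSet)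
    (hapex : apex G ∉ t) : ∃ p, Covers t p := by
  induction t using Sym2.ind with
  | _ a b =>
    rcases a with u | p | _ <;> rcases b with v | q | _
    · exact ⟨(⟨s(u, v), ht⟩, 0), .inr ⟨rfl, rfl⟩⟩
    · exact ⟨q, .inl (Sym2.mem_mk_right _ _)⟩
    · exact (hapex (Sym2.mem_mk_right _ _)).elim
    · exact ⟨p, .inl (Sym2.mem_mk_left _ _)⟩
    all_goals first | exact ht.elim | exact (hapex (Sym2.mem_mk_left _ _)).elim

lemma mem_pendantTriangle_of_covers {t : Sym2 (V ⊕ (G.edgeSet × Fin 2) ⊕ Unit)}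
    {p : G.edgeSet × Fin 2} (ht : t ∈ (extGraph G).edgeSet) (hc : Covers t p) :
    ∀ x ∈ t, x ∈ pendantTriangle p := by
  rcases hc with hp | ⟨-, rfl⟩
  · obtain ⟨y, rfl⟩ := Sym2.mem_iff_exists.1 hp
    rcases y with u | _ | _
    · intro x hx
      rcases Sym2.mem_iff.1 hx with rfl | rfl
      · exact Set.mem_insert _ _
      · exact Set.mem_insert_of_mem _ ⟨u, ht, rfl⟩
    all_goals exact ht.elim
  · intro x hx
    obtain ⟨u, hu, rfl⟩ := Sym2.mem_map.1 hx
    exact Set.mem_insert_of_mem _ ⟨u, hu, rfl⟩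

lemma card_le_indepNum_of_forall_apex_mem [Finite V] {T : Finset (extGraph G).edgeSet}
    (hT : (edgeCliqueGraph (extGraph G)).IsIndepSet T) (hapex : ∀ t ∈ T, apex G ∈ (t : Sym2 _)) :
    #T ≤ G.indepNum := by
  classical
  have := Fintype.ofFinite V
  let S : Finset V := {v | apexEdge v ∈ T}
  have hS : G.IsIndepSet S := by
    intro v hv w hw hvw hadj
    have hclique := isClique_insert_apex (isClique_pair.2 fun _ => hadj)
    have hin {u} (hu : u = v ∨ u = w) (huT : apexEdge u ∈ T) :
        apexEdge u ∈ {t ∈ (T : Set (extGraph G).edgeSet) | ∀ x ∈ (t : Sym2 _), x ∈ insert (apex G) (Sum.inl '' {v, w})} := by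
      refine ⟨huT, fun x hx => ?_⟩
      rcases Sym2.mem_iff.1 hx with rfl | rfl
      · exact Set.mem_insert_of_mem _ ⟨u, hu, rfl⟩
      · exact Set.mem_insert _ _
    exact hvw (apexEdge_injective (subsingleton_of_isIndepSet_of_isClique hT hclique
      (hin (.inl rfl) (by simpa [S] using hv)) (hin (.inr rfl) (by simpa [S] using hw))))
  calc #T ≤ #(S.image apexEdge) := card_le_card fun t ht => by
        obtain ⟨v, rfl⟩ := exists_eq_apexEdge (hapex t ht)
        exact mem_image_of_mem _ (by simpa [S] using ht)
    _ ≤ #S := card_image_le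
    _ ≤ G.indepNum := hS.card_le_indepNum

lemma card_le_of_forall_apex_notMem [Finite V] {T : Finset (extGraph G).edgeSet}
    (hT : (edgeCliqueGraph (extGraph G)).IsIndepSet T) (hapex : ∀ t ∈ T, apex G ∉ (t : Sym2 _)) :
    #T ≤ 2 * G.edgeSet.ncard := by
  have := Fintype.ofFinite G.edgeSet
  calc #T ≤ #(univ : Finset (G.edgeSet × Fin 2)) :=
        card_le_card_of_forall_subsingleton (s := T)
          (fun (t : (extGraph G).edgeSet) p => Covers (t : Sym2 _) p)
          (fun t ht => (exists_covers t.2 (hapex t ht)).imp fun p hp => ⟨mem_univ p, hp⟩)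
          (fun p _ => (subsingleton_of_isIndepSet_of_isClique hT (isClique_pendantTriangle p)).anti
            fun t ht => ⟨ht.1, mem_pendantTriangle_of_covers t.2 ht.2⟩)
    _ = 2 * G.edgeSet.ncard := by
      rw [card_univ, Fintype.card_prod, Fintype.card_fin, ← Nat.card_eq_fintype_card,
        Nat.card_coe_set_eq, mul_comm]

lemma card_le_of_isIndepSet [Finite V] {T : Finset (extGraph G).edgeSet}
    (hT : (edgeCliqueGraph (extGraph G)).IsIndepSet T) :
    #T ≤ 2 * G.edgeSet.ncard + G.indepNum := by
  classical
  rw [← card_filter_add_card_filter_not fun t : (extGraph G).edgeSet => apex G ∈ (t : Sym2 _),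
    add_comm]
  gcongr
  · exact card_le_of_forall_apex_notMem (hT.mono (coe_subset.2 (filter_subset _ _))) fun t ht => (mem_filter.1 ht).2
  · exact card_le_indepNum_of_forall_apex_mem (hT.mono (coe_subset.2 (filter_subset _ _))) fun t ht => (mem_filter.1 ht).2

lemma exists_isIndepSet_card_eq [Finite V] {S : Finset V} (hS : G.IsIndepSet S) :
    ∃ T : Finset (extGraph G).edgeSet, (edgeCliqueGraph (extGraph G)).IsIndepSet T ∧
      #T = 2 * G.edgeSet.ncard + #S := by
  have := Fintype.ofFinite G.edgeSet
  let f : (G.edgeSet × Fin 2) ⊕ V ↪ (extGraph G).edgeSet :=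
    ⟨Sum.elim pendantEdge apexEdge,
      pendantEdge_injective.sumElim apexEdge_injective pendantEdge_ne_apexEdge⟩
  refine ⟨(univ.disjSum S).map f, ?_, ?_⟩
  · rw [coe_map, isIndepSet_iff, f.injective.injOn.pairwise_image]
    rintro (p | v) ha (q | w) hb hne
    · exact not_edgeCliqueGraph_adj (x := .inr (.inl p)) (y := .inr (.inl q))
        (Sym2.mem_mk_right _ _) (Sym2.mem_mk_right _ _) (by simpa using hne) id
    · exact not_edgeCliqueGraph_adj (x := .inr (.inl p)) (y := apex G)
        (Sym2.mem_mk_right _ _) (Sym2.mem_mk_right _ _) (by simp [apex]) id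
    · exact not_edgeCliqueGraph_adj (x := apex G) (y := .inr (.inl q))
        (Sym2.mem_mk_right _ _) (Sym2.mem_mk_right _ _) (by simp [apex]) id
    · exact not_edgeCliqueGraph_adj (Sym2.mem_mk_left _ _) (Sym2.mem_mk_left _ _)
        (by simpa using hne) (hS (by simpa using ha) (by simpa using hb) (by simpa using hne))
  · rw [card_map, card_disjSum, card_univ, Fintype.card_prod, Fintype.card_fin,
      ← Nat.card_eq_fintype_card, Nat.card_coe_set_eq, mul_comm]

end ExtGraph

end ECG

/-- For `H` obtained from `G` by adding two simplicial vertices at every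
edge and one universal vertex over the original vertices, `α'(H) = 2m + α(G)`,
where `m` is the number of edges of `G`. -/
theorem alpha'_extGraph {V : Type*} [Fintype V] (G : SimpleGraph V) :
    ECG.indepNum (ECG.edgeCliqueGraph (ECG.extGraph G)) =
      2 * G.edgeSet.ncard + ECG.indepNum G := by
  rw [ECG.indepNum_eq_indepNum, ECG.indepNum_eq_indepNum]
  obtain ⟨T, hT⟩ := (ECG.edgeCliqueGraph (ECG.extGraph G)).exists_isNIndepSet_indepNum
  obtain ⟨S, hS⟩ := G.exists_isNIndepSet_indepNum
  obtain ⟨T', hT', hT'card⟩ := ECG.exists_isIndepSet_card_eq hS.isIndepSet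
  exact le_antisymm (hT.card_eq ▸ ECG.card_le_of_isIndepSet hT.isIndepSet)
    (hS.card_eq ▸ hT'card ▸ hT'.card_le_indepNum)
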